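/- arXiv:2208.11044 — 6 statements merged into one kernel-verified Lean document; each statement's English description precedes it below -/
import Mathlib

section
/- For all x, y ∈ Λ^ℓ V (with n = dim V): (1) Pf(J(x), y) = Λ^ℓ h(x, y); (2) Pf(x, J(y)) = (-1)^{(n-ℓ)ℓ} σ(Λ^ℓ h(x,y)); (3) Λ^ℓ h(J(x), y) = δ_ℓ · Pf(x, y); (4) Λ^ℓ h(J(x), J(y)) = (-1)^{(n-ℓ)ℓ} δ_ℓ · σ(Λ^ℓ h(x, y)). In particular J is a semi-similitude between Pf and Λ^ℓ h. -/
/-!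
(1) is the defining property of `J`. The exterior algebra is graded-commutative,
`x ∧ z = (-1)^{pq} z ∧ x` for `x, z` of degrees `p, q`, and `Λ^ℓ h` is `σ`-hermitian because on
decomposable vectors it is the Gram determinant of the `σ`-hermitian form `h`; together these turn
(1) into (2). The defining property of the Hodge operator `J'` of degree `n - ℓ`, applied to `J x`
and combined with `J' J = δ`, gives (3) when `n - ℓ = ℓ` (otherwise both sides vanish for degree
reasons) and, with (2), gives (4).
-/

open ExteriorAlgebra

/-- The wedge product of a family of vectors in the exterior algebra. -/
noncomputable def wedgeFam (F : Type*) {V : Type*} [Field F] [AddCommGroup V] [Module F V]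
    {k : ℕ} (u : Fin k → V) : ExteriorAlgebra F V :=
  (List.ofFn fun i => ExteriorAlgebra.ι F (u i)).prod

namespace ExteriorAlgebra

variable {R M : Type*} [CommRing R] [AddCommGroup M] [Module R M]

theorem ι_mul_ιMulti_comm (m : M) : ∀ {q : ℕ} (w : Fin q → M),
    ι R m * ιMulti R q w = ((-1 : R) ^ q) • (ιMulti R q w * ι R m)
  | 0, w => by simp
  | q + 1, w => by
    have hswap : ι R m * ι R (w 0) = -(ι R (w 0) * ι R m) :=
      eq_neg_of_add_eq_zero_left (ι_add_mul_swap m (w 0))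
    rw [ιMulti_succ_apply, ← mul_assoc, hswap, neg_mul, mul_assoc,
      ι_mul_ιMulti_comm m (Matrix.vecTail w), mul_smul_comm, ← neg_smul, ← mul_assoc, pow_succ,
      mul_neg_one]

theorem ιMulti_mul_ιMulti_comm {q : ℕ} (w : Fin q → M) : ∀ {p : ℕ} (u : Fin p → M),
    ιMulti R p u * ιMulti R q w = ((-1 : R) ^ (p * q)) • (ιMulti R q w * ιMulti R p u)
  | 0, u => by simp
  | p + 1, u => by
    rw [ιMulti_succ_apply, mul_assoc, ιMulti_mul_ιMulti_comm w (Matrix.vecTail u),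
      mul_smul_comm, ← mul_assoc, ι_mul_ιMulti_comm, smul_mul_assoc, smul_smul, mul_assoc,
      ← pow_add, add_mul, one_mul, add_comm]

theorem mul_comm_of_mem_exteriorPower {p q : ℕ} {x y : ExteriorAlgebra R M}
    (hx : x ∈ ⋀[R]^p M) (hy : y ∈ ⋀[R]^q M) :
    x * y = ((-1 : R) ^ (p * q)) • (y * x) := by
  rw [← ιMulti_span_fixedDegree] at hx hy
  induction hx, hy using Submodule.span_induction₂ with
  | mem_mem x y hx hy =>
    obtain ⟨u, rfl⟩ := hx
    obtain ⟨w, rfl⟩ := hy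
    exact ιMulti_mul_ιMulti_comm w u
  | zero_left => simp
  | zero_right => simp
  | add_left x x' y _ _ _ hx hx' => rw [add_mul, hx, hx', mul_add, smul_add]
  | add_right x y y' _ _ _ hy hy' => rw [mul_add, hy, hy', add_mul, smul_add]
  | smul_left s x y _ _ hxy => rw [smul_mul_assoc, hxy, smul_comm, mul_smul_comm]
  | smul_right s x y _ _ hxy => rw [mul_smul_comm, hxy, smul_comm, smul_mul_assoc]

end ExteriorAlgebra

theorem det_gram_conj_symm {R V : Type*} [CommRing R] (σ : R ≃+* R) (h : V → V → R)
    (h_herm : ∀ u w, h w u = σ (h u w))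
    {k : ℕ} (u w : Fin k → V) :
    (Matrix.of fun i j => h (w i) (u j)).det = σ (Matrix.of fun i j => h (u i) (w j)).det := by
  have hmat : (Matrix.of fun i j => h (w i) (u j)) =
      ((Matrix.of fun i j => h (u i) (w j)).map σ).transpose := by
    ext i j
    exact h_herm (u j) (w i)
  rw [hmat, Matrix.det_transpose, ← RingEquiv.mapMatrix_apply, ← RingEquiv.map_det]

theorem conj_symm_of_eq_det_gram {F V : Type*} [Field F] [AddCommGroup V] [Module F V]
    (σ : F ≃+* F) (hσ : ∀ a, σ (σ a) = a)
    (h : V → V → F) (h_herm : ∀ u w, h w u = σ (h u w))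
    (H : ExteriorAlgebra F V → ExteriorAlgebra F V → F)
    (H_add_left : ∀ x x' y, H (x + x') y = H x y + H x' y)
    (H_add_right : ∀ x y y', H x (y + y') = H x y + H x y')
    (H_smul_left : ∀ (s : F) x y, H (s • x) y = σ s * H x y)
    (H_smul_right : ∀ (s : F) x y, H x (s • y) = s * H x y)
    (H_det : ∀ (k : ℕ) (u w : Fin k → V),
      H (wedgeFam F u) (wedgeFam F w) = Matrix.det (Matrix.of fun i j => h (u i) (w j)))
    {ℓ : ℕ} {x y : ExteriorAlgebra F V} (hx : x ∈ ⋀[F]^ℓ V) (hy : y ∈ ⋀[F]^ℓ V) :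
    H y x = σ (H x y) := by
  have H_zero_left (y) : H 0 y = 0 := by simpa using H_add_left 0 0 y
  have H_zero_right (x) : H x 0 = 0 := by simpa using H_add_right x 0 0
  rw [← ιMulti_span_fixedDegree] at hx hy
  induction hx, hy using Submodule.span_induction₂ with
  | mem_mem x y hx hy =>
    obtain ⟨u, rfl⟩ := hx
    obtain ⟨w, rfl⟩ := hy
    rw [ιMulti_apply, ιMulti_apply]
    exact (H_det ℓ w u).trans ((det_gram_conj_symm σ h h_herm u w).trans
      (congrArg σ (H_det ℓ u w).symm))
  | zero_left => rw [H_zero_left, H_zero_right, map_zero]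
  | zero_right => rw [H_zero_left, H_zero_right, map_zero]
  | add_left x x' y _ _ _ hx hx' => rw [H_add_left, H_add_right, hx, hx', map_add]
  | add_right x y y' _ _ _ hy hy' => rw [H_add_left, H_add_right, hy, hy', map_add]
  | smul_left s x y _ _ hxy => rw [H_smul_left, H_smul_right, hxy, map_mul, hσ]
  | smul_right s x y _ _ hxy => rw [H_smul_left, H_smul_right, hxy, map_mul]

theorem hodge_semi_similitude_general
    {F V : Type*} [Field F] [AddCommGroup V] [Module F V]
    (n ℓ : ℕ)
    (σ : F ≃+* F) (hσ : ∀ a, σ (σ a) = a)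
    (h : V → V → F)
    (h_herm : ∀ u w, h w u = σ (h u w))
    (H : ExteriorAlgebra F V → ExteriorAlgebra F V → F)
    (H_add_left : ∀ x x' y, H (x + x') y = H x y + H x' y)
    (H_add_right : ∀ x y y', H x (y + y') = H x y + H x y')
    (H_smul_left : ∀ (s : F) x y, H (s • x) y = σ s * H x y)
    (H_smul_right : ∀ (s : F) x y, H x (s • y) = s * H x y)
    (H_det : ∀ (k : ℕ) (u w : Fin k → V),
      H (wedgeFam F u) (wedgeFam F w) = Matrix.det (Matrix.of fun i j => h (u i) (w j)))
    (H_cross : ∀ (k m : ℕ), k ≠ m → ∀ x ∈ ⋀[F]^k V, ∀ y ∈ ⋀[F]^m V, H x y = 0)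
    (b : ExteriorAlgebra F V →ₗ[F] F)
    (hb_off : ∀ (k : ℕ), k ≠ n → ∀ z ∈ ⋀[F]^k V, b z = 0)
    (J : ExteriorAlgebra F V → ExteriorAlgebra F V)
    (hJ_mem : ∀ x ∈ ⋀[F]^ℓ V, J x ∈ ⋀[F]^(n - ℓ) V)
    (hJ_char : ∀ x ∈ ⋀[F]^ℓ V, ∀ y ∈ ⋀[F]^ℓ V, b (J x * y) = H x y)
    (J' : ExteriorAlgebra F V → ExteriorAlgebra F V)
    (hJ'_char : ∀ x ∈ ⋀[F]^(n - ℓ) V, ∀ y ∈ ⋀[F]^(n - ℓ) V, b (J' x * y) = H x y)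
    (δ : F) (hJsq : ∀ x ∈ ⋀[F]^ℓ V, J' (J x) = δ • x) :
    ∀ x ∈ ⋀[F]^ℓ V, ∀ y ∈ ⋀[F]^ℓ V,
      b (J x * y) = H x y ∧
      b (x * J y) = (-1 : F) ^ ((n - ℓ) * ℓ) * σ (H x y) ∧
      H (J x) y = δ * b (x * y) ∧
      H (J x) (J y) = (-1 : F) ^ ((n - ℓ) * ℓ) * δ * σ (H x y) := by
  intro x hx y hy
  have hJx := hJ_mem x hx
  have hH_symm : H y x = σ (H x y) :=
    conj_symm_of_eq_det_gram σ hσ h h_herm H H_add_left H_add_right H_smul_left H_smul_right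
      H_det hx hy
  have hJ'J_char (z : ExteriorAlgebra F V) (hz : z ∈ ⋀[F]^(n - ℓ) V) :
      δ * b (x * z) = H (J x) z := by
    rw [← hJ'_char (J x) hJx z hz, hJsq x hx, smul_mul_assoc, map_smul, smul_eq_mul]
  have h_right : b (x * J y) = (-1 : F) ^ ((n - ℓ) * ℓ) * σ (H x y) := by
    rw [mul_comm_of_mem_exteriorPower hx (hJ_mem y hy), map_smul, smul_eq_mul,
      hJ_char y hy x hx, hH_symm, Nat.mul_comm]
  refine ⟨hJ_char x hx y hy, h_right, ?_, ?_⟩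
  · by_cases hdeg : n - ℓ = ℓ
    · exact (hJ'J_char y (hdeg.symm ▸ hy)).symm
    · rw [H_cross (n - ℓ) ℓ hdeg (J x) hJx y hy,
        hb_off (ℓ + ℓ) (by omega) (x * y) (SetLike.mul_mem_graded hx hy), mul_zero]
  · rw [← hJ'J_char (J y) (hJ_mem y hy), h_right, mul_left_comm, mul_assoc]

/-- for all `x, y ∈ Λ^ℓ V`:
(1) `Pf(J x, y) = Λ^ℓh(x,y)`; (2) `Pf(x, J y) = (-1)^{(n-ℓ)ℓ} σ(Λ^ℓh(x,y))`;
(3) `Λ^ℓh(J x, y) = δ_ℓ Pf(x,y)`; (4) `Λ^ℓh(J x, J y) = (-1)^{(n-ℓ)ℓ} δ_ℓ σ(Λ^ℓh(x,y))`.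
Here `Pf(x,y) = b(x ∧ y)`, `J` is the Hodge operator with `J² = δ • id`. -/
theorem hodge_semi_similitude
    {F V : Type*} [Field F] [AddCommGroup V] [Module F V] [FiniteDimensional F V]
    (n ℓ : ℕ) (hfr : Module.finrank F V = n) (hℓ : ℓ ≤ n)
    (σ : F ≃+* F) (hσ : ∀ a, σ (σ a) = a)
    (h : V → V → F)
    (h_add_left : ∀ u u' w, h (u + u') w = h u w + h u' w)
    (h_add_right : ∀ u w w', h u (w + w') = h u w + h u w')
    (h_smul_left : ∀ (s : F) u w, h (s • u) w = σ s * h u w)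
    (h_smul_right : ∀ (s : F) u w, h u (s • w) = s * h u w)
    (h_herm : ∀ u w, h w u = σ (h u w))
    (h_nondeg : ∀ u, (∀ w, h u w = 0) → u = 0)
    (v : Module.Basis (Fin n) F V)
    (h_orth : ∀ i j, i ≠ j → h (v i) (v j) = 0)
    (H : ExteriorAlgebra F V → ExteriorAlgebra F V → F)
    (H_add_left : ∀ x x' y, H (x + x') y = H x y + H x' y)
    (H_add_right : ∀ x y y', H x (y + y') = H x y + H x y')
    (H_smul_left : ∀ (s : F) x y, H (s • x) y = σ s * H x y)
    (H_smul_right : ∀ (s : F) x y, H x (s • y) = s * H x y)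
    (H_det : ∀ (k : ℕ) (u w : Fin k → V),
      H (wedgeFam F u) (wedgeFam F w) = Matrix.det (Matrix.of fun i j => h (u i) (w j)))
    (H_cross : ∀ (k m : ℕ), k ≠ m → ∀ x ∈ ⋀[F]^k V, ∀ y ∈ ⋀[F]^m V, H x y = 0)
    (b : ExteriorAlgebra F V →ₗ[F] F)
    (hb_inj : ∀ z ∈ ⋀[F]^n V, b z = 0 → z = 0)
    (hb_off : ∀ (k : ℕ), k ≠ n → ∀ z ∈ ⋀[F]^k V, b z = 0)
    (J : ExteriorAlgebra F V → ExteriorAlgebra F V)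
    (hJ_mem : ∀ x ∈ ⋀[F]^ℓ V, J x ∈ ⋀[F]^(n - ℓ) V)
    (hJ_char : ∀ x ∈ ⋀[F]^ℓ V, ∀ y ∈ ⋀[F]^ℓ V, b (J x * y) = H x y)
    (J' : ExteriorAlgebra F V → ExteriorAlgebra F V)
    (hJ'_mem : ∀ x ∈ ⋀[F]^(n - ℓ) V, J' x ∈ ⋀[F]^ℓ V)
    (hJ'_char : ∀ x ∈ ⋀[F]^(n - ℓ) V, ∀ y ∈ ⋀[F]^(n - ℓ) V, b (J' x * y) = H x y)
    (δ : F) (hJsq : ∀ x ∈ ⋀[F]^ℓ V, J' (J x) = δ • x) :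
    ∀ x ∈ ⋀[F]^ℓ V, ∀ y ∈ ⋀[F]^ℓ V,
      b (J x * y) = H x y ∧
      b (x * J y) = (-1 : F) ^ ((n - ℓ) * ℓ) * σ (H x y) ∧
      H (J x) y = δ * b (x * y) ∧
      H (J x) (J y) = (-1 : F) ^ ((n - ℓ) * ℓ) * δ * σ (H x y) :=
  hodge_semi_similitude_general n ℓ σ hσ h h_herm H H_add_left H_add_right H_smul_left H_smul_right
    H_det H_cross b hb_off J hJ_mem hJ_char J' hJ'_char δ hJsq
end

section
/- In the algebra K_ℓ as above, the quadratic form det: K_ℓ → R, det(x_0 + j x_1) = N(x_0) − δ N(x_1), is multiplicative, and its polarization f_det is degenerate if and only if char F = 2 and σ = id; in fact f_det vanishes identically in that case. -/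
/-- The element `x₀ + j·x₁` of the algebra `K_ℓ`, realized as the 2×2 matrix
`[[x₀, δ·σ(x₁)], [x₁, σ(x₀)]]` over `F`. -/
def Kmk {F : Type*} [Field F] (σ : F → F) (δ x0 x1 : F) : Matrix (Fin 2) (Fin 2) F :=
  !![x0, δ * σ x1; x1, σ x0]

/-- The quadratic form `det(x₀ + j x₁) = N(x₀) − δ·N(x₁)` on `K_ℓ`, `N(y) = σ(y)y`. -/
def Kdet {F : Type*} [Field F] (σ : F → F) (δ x0 x1 : F) : F :=
  σ x0 * x0 - δ * (σ x1 * x1)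

/-- The polarization `f_det(x,y) = det(x+y) − det(x) − det(y)` of `Kdet`. -/
def Kpol {F : Type*} [Field F] (σ : F → F) (δ x0 x1 y0 y1 : F) : F :=
  Kdet σ δ (x0 + y0) (x1 + y1) - Kdet σ δ x0 x1 - Kdet σ δ y0 y1

/-- the quadratic form `det : K_ℓ → R` is multiplicative, and its
polarization `f_det` is degenerate if and only if `char F = 2` and `σ = id`;
indeed `f_det` vanishes identically in that case. -/
theorem Kdet_multiplicative_and_polarization_degenerate_iff
    {F : Type*} [Field F] (σ : F ≃+* F) (hσ : ∀ a, σ (σ a) = a)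
    (δ : F) (hδR : σ δ = δ) (hδ0 : δ ≠ 0) :
    -- det is multiplicative
    (∀ x0 x1 y0 y1 z0 z1 : F,
        Kmk ⇑σ δ x0 x1 * Kmk ⇑σ δ y0 y1 = Kmk ⇑σ δ z0 z1 →
        Kdet ⇑σ δ z0 z1 = Kdet ⇑σ δ x0 x1 * Kdet ⇑σ δ y0 y1) ∧
    -- the polarization is degenerate iff char F = 2 and σ = id
    ((∃ x0 x1 : F, ¬(x0 = 0 ∧ x1 = 0) ∧ ∀ y0 y1 : F, Kpol ⇑σ δ x0 x1 y0 y1 = 0)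
        ↔ (ringChar F = 2 ∧ ∀ a, σ a = a)) ∧
    -- indeed the polarization vanishes in that case
    ((ringChar F = 2 ∧ ∀ a, σ a = a) →
        ∀ x0 x1 y0 y1 : F, Kpol ⇑σ δ x0 x1 y0 y1 = 0) := by
  have hpol : ∀ x0 x1 y0 y1 : F,
      Kpol ⇑σ δ x0 x1 y0 y1 = σ x0 * y0 + σ y0 * x0 - δ * (σ x1 * y1 + σ y1 * x1) := by
    intro x0 x1 y0 y1
    simp only [Kpol, Kdet, map_add]
    ring
  have hvanish : (ringChar F = 2 ∧ ∀ a, σ a = a) →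
      ∀ x0 x1 y0 y1 : F, Kpol ⇑σ δ x0 x1 y0 y1 = 0 := by
    rintro ⟨hc, hid⟩ x0 x1 y0 y1
    have h2 : (2 : F) = 0 := by
      haveI : CharP F 2 := hc ▸ ringChar.charP F
      exact_mod_cast CharP.cast_eq_zero F 2
    rw [hpol, hid, hid, hid, hid]
    have : x0 * y0 + y0 * x0 - δ * (x1 * y1 + y1 * x1)
        = 2 * (x0 * y0) - 2 * (δ * (x1 * y1)) := by ring
    rw [this, h2]; ring
  refine ⟨?_, ⟨?_, ?_⟩, hvanish⟩
  · intro x0 x1 y0 y1 z0 z1 h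
    rw [Kmk, Kmk, Kmk, Matrix.mul_fin_two] at h
    have h00 : x0 * y0 + δ * σ x1 * y1 = z0 := by
      have := congrArg (fun M : Matrix (Fin 2) (Fin 2) F => M 0 0) h
      simpa using this
    have h10 : x1 * y0 + σ x0 * y1 = z1 := by
      have := congrArg (fun M : Matrix (Fin 2) (Fin 2) F => M 1 0) h
      simpa using this
    subst h00 h10
    simp only [Kdet, map_add, map_mul, hσ, hδR]
    ring
  · rintro ⟨x0, x1, hx, h⟩
    -- σ x0 = -x0, σ x1 = -x1
    have e0 : σ x0 + x0 = 0 := by have := h 1 0; rw [hpol] at this; simpa using this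
    have e1 : σ x1 + x1 = 0 := by
      have := h 0 1
      rw [hpol] at this
      simp only [map_one, map_zero, mul_one, one_mul, mul_zero, zero_mul, add_zero,
        zero_add, zero_sub, neg_eq_zero] at this
      exact (mul_eq_zero.mp this).resolve_left hδ0
    have key : ∀ y0 y1 : F, x0 * (σ y0 - y0) - δ * (x1 * (σ y1 - y1)) = 0 := by
      intro y0 y1
      have := h y0 y1
      rw [hpol] at this
      have hx0 : σ x0 = -x0 := by linear_combination e0
      have hx1 : σ x1 = -x1 := by linear_combination e1
      rw [hx0, hx1] at this
      linear_combination this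
    have hid : ∀ a, σ a = a := by
      intro a
      rcases not_and_or.mp hx with h0 | h1
      · have := key a 0
        simp only [map_zero, sub_zero, mul_zero, sub_self] at this
        have : x0 * (σ a - a) = 0 := by linear_combination this
        have := (mul_eq_zero.mp this).resolve_left h0
        exact sub_eq_zero.mp this
      · have := key 0 a
        simp only [map_zero, sub_zero, mul_zero, zero_mul, zero_sub] at this
        have h' : x1 * (σ a - a) = 0 := by
          rcases mul_eq_zero.mp (by linear_combination -this : δ * (x1 * (σ a - a)) = 0) with
            hh | hh
          · exact absurd hh hδ0
          · exact hh
        have := (mul_eq_zero.mp h').resolve_left h1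
        exact sub_eq_zero.mp this
    refine ⟨?_, hid⟩
    have h2 : (2 : F) = 0 := by
      rcases not_and_or.mp hx with h0 | h1
      · have : σ x0 = x0 := hid x0
        have : (2 : F) * x0 = 0 := by linear_combination e0 - this
        exact (mul_eq_zero.mp this).resolve_right h0
      · have : σ x1 = x1 := hid x1
        have : (2 : F) * x1 = 0 := by linear_combination e1 - this
        exact (mul_eq_zero.mp this).resolve_right h1
    exact CharP.ringChar_of_prime_eq_zero Nat.prime_two (by exact_mod_cast h2)
  · rintro ⟨hc, hid⟩
    refine ⟨1, 0, by simp, fun y0 y1 => hvanish ⟨hc, hid⟩ 1 0 y0 y1⟩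
end

section
/- For an F-linear similitude λ of h with multiplier r (i.e., h(λv, λw) = r·h(v,w)), the conjugate Λ^{n-ℓ}λ ∘ J ∘ (Λ^ℓ λ)^{-1} equals t·J where t = r^{-ℓ}·det λ. In particular similitudes normalize the set F·id ∘ J. -/
/-!
The Hodge star is pinned down by `b (J x * y) = H x y`. Transporting along `Λλ` multiplies the
top-degree functional `b` by `det λ` and the Gram-determinant form `H` on `Λ^ℓ` by `r^ℓ`, so
`Λλ (J x) - t • J (Λλ x)` pairs to zero against all of `Λ^ℓ`. The wedge pairing
`Λ^{n-ℓ} × Λ^ℓ → Λ^n` is nondegenerate: on the basis of wedges of basis vectors it pairs each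
index set only with its complement.
-/

open ExteriorAlgebra

theorem LinearMap.eqOn_span₂ {R M N P : Type*} [CommRing R] [AddCommGroup M] [Module R M]
    [AddCommGroup N] [Module R N] [AddCommGroup P] [Module R P] {σ : R →+* R}
    {B B' : M →ₛₗ[σ] N →ₗ[R] P} {s : Set M} {t : Set N}
    (h : ∀ x ∈ s, ∀ y ∈ t, B x y = B' x y) :
    ∀ x ∈ Submodule.span R s, ∀ y ∈ Submodule.span R t, B x y = B' x y := by
  intro x hx y hy
  have hs : ∀ x ∈ s, B x y = B' x y := fun x hxs =>
    LinearMap.eqOn_span' (f := B x) (g := B' x) (h x hxs) hy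
  exact LinearMap.eqOn_span' (f := B.flip y) (g := B'.flip y) hs hx

namespace ExteriorAlgebra

variable {R M N : Type*} [CommRing R] [AddCommGroup M] [Module R M] [AddCommGroup N] [Module R N]

theorem map_mem_exteriorPower (f : M →ₗ[R] N) {k : ℕ} {z : ExteriorAlgebra R M}
    (hz : z ∈ ⋀[R]^k M) : map f z ∈ ⋀[R]^k N := by
  have hle : (⋀[R]^k M).map (map f).toLinearMap ≤ ⋀[R]^k N := by
    rw [← ιMulti_span_fixedDegree, ← ιMulti_span_fixedDegree, Submodule.map_span,
      Submodule.span_le]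
    rintro _ ⟨_, ⟨u, rfl⟩, rfl⟩
    exact Submodule.subset_span ⟨f ∘ u, (map_apply_ιMulti f u).symm⟩
  exact hle (Submodule.mem_map_of_mem hz)

theorem exists_mem_exteriorPower_map_eq (e : M ≃ₗ[R] N) {k : ℕ} {z : ExteriorAlgebra R N}
    (hz : z ∈ ⋀[R]^k N) : ∃ y ∈ ⋀[R]^k M, map (e : M →ₗ[R] N) y = z := by
  refine ⟨map (e.symm : N →ₗ[R] M) z, map_mem_exteriorPower _ hz, ?_⟩
  rw [← AlgHom.comp_apply, map_comp_map]
  simp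

theorem apply_map_eq_det_mul {n : ℕ} (v : Module.Basis (Fin n) R M)
    (φ : ExteriorAlgebra R M →ₗ[R] R) (f : M →ₗ[R] M) {z : ExteriorAlgebra R M}
    (hz : z ∈ ⋀[R]^n M) :
    φ (map f z) = LinearMap.det f * φ z := by
  rw [← ιMulti_span_fixedDegree] at hz
  refine LinearMap.eqOn_span' (f := φ ∘ₗ (map f).toLinearMap) (g := LinearMap.det f • φ)
    ?_ hz
  rintro _ ⟨u, rfl⟩
  have hdet := (φ.compAlternatingMap (ιMulti R n)).eq_smul_basis_det v
  have hu := congrArg (· u) hdet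
  have hfu := congrArg (· (f ∘ u)) hdet
  simp only [LinearMap.compAlternatingMap_apply, AlternatingMap.smul_apply, smul_eq_mul] at hu hfu
  simp only [LinearMap.coe_comp, Function.comp_apply, AlgHom.toLinearMap_apply, map_apply_ιMulti,
    LinearMap.smul_apply, smul_eq_mul, hu, hfu, Module.Basis.det_comp]
  ring

theorem eq_zero_of_forall_mul_eq_zero {I : Type*} [Fintype I] [LinearOrder I]
    (v : Module.Basis I R M) {k m : ℕ} (hkm : m + k = Fintype.card I) {D : ExteriorAlgebra R M}
    (hD : D ∈ ⋀[R]^k M) (h : ∀ y ∈ ⋀[R]^m M, D * y = 0) : D = 0 := by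
  classical
  let B := v.exteriorPower k
  set c := B.repr ⟨D, hD⟩
  suffices hc : ∀ T, c T = 0 from
    congrArg Subtype.val (B.forall_coord_eq_zero_iff.1 hc)
  intro T
  let Tc := Set.powersetCard.compl hkm T
  have hT : Disjoint T.val Tc.val := disjoint_compl_right
  have hD_sum : D = ∑ S, c S • ιMulti_family R k v S := by
    simpa [B] using (congrArg Subtype.val (B.sum_repr ⟨D, hD⟩)).symm
  have hD_mul : D * ιMulti_family R m v Tc =
      c T • (Set.powersetCard.permOfDisjoint hT).sign •
        v.ExteriorAlgebra (Set.powersetCard.disjUnion hT).val := by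
    rw [hD_sum, Finset.sum_mul, Finset.sum_eq_single T, smul_mul_assoc,
      ιMulti_family_mul_of_disjoint, basis_apply_powersetCard]
    · intro S _ hST
      have hS : ¬Disjoint S.val Tc.val := by
        rw [Set.powersetCard.coe_compl, disjoint_compl_right_iff]
        exact fun hle => hST (Set.powersetCard.eq_iff_subset.2 hle)
      rw [smul_mul_assoc, ιMulti_family_mul_of_not_disjoint R v S Tc hS, smul_zero]
    · simp
  have hzero := h (ιMulti_family R m v Tc) (ιMulti_range R m (Set.mem_range_self _))
  rw [hD_mul, smul_comm, smul_eq_zero_iff_eq] at hzero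
  exact v.ExteriorAlgebra.linearIndependent.smul_left_injective _ (hzero.trans (zero_smul R _).symm)

theorem apply_map_map_of_similitude {σ : R →+* R}
    (B : ExteriorAlgebra R M →ₛₗ[σ] ExteriorAlgebra R M →ₗ[R] R) (h : M → M → R) {ℓ : ℕ}
    (hB : ∀ u w : Fin ℓ → M,
      B (ιMulti R ℓ u) (ιMulti R ℓ w) = (Matrix.of fun i j => h (u i) (w j)).det)
    (f : M →ₗ[R] M) (r : R) (hf : ∀ u w, h (f u) (f w) = r * h u w)
    {x y : ExteriorAlgebra R M} (hx : x ∈ ⋀[R]^ℓ M) (hy : y ∈ ⋀[R]^ℓ M) :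
    B (map f x) (map f y) = r ^ ℓ * B x y := by
  rw [← ιMulti_span_fixedDegree] at hx hy
  refine LinearMap.eqOn_span₂ (B := (B.compl₂ (map f).toLinearMap).comp (map f).toLinearMap)
    (B' := r ^ ℓ • B) ?_ x hx y hy
  rintro _ ⟨u, rfl⟩ _ ⟨w, rfl⟩
  have hmat : (Matrix.of fun i j => h (f (u i)) (f (w j)))
      = r • Matrix.of fun i j => h (u i) (w j) := by
    ext i j
    simp [hf]
  simp only [LinearMap.comp_apply, LinearMap.compl₂_apply, AlgHom.toLinearMap_apply,
    map_apply_ιMulti, Function.comp_apply, hB, hmat, Matrix.det_smul, Fintype.card_fin,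
    LinearMap.smul_apply, smul_eq_mul]

end ExteriorAlgebra

theorem similitude_conjugates_hodge_general
    {F V : Type*} [Field F] [AddCommGroup V] [Module F V]
    (n ℓ : ℕ) (hℓ : ℓ ≤ n)
    (σ : F ≃+* F)
    (h : V → V → F)
    (v : Module.Basis (Fin n) F V)
    (H : ExteriorAlgebra F V → ExteriorAlgebra F V → F)
    (H_add_left : ∀ x x' y, H (x + x') y = H x y + H x' y)
    (H_add_right : ∀ x y y', H x (y + y') = H x y + H x y')
    (H_smul_left : ∀ (s : F) x y, H (s • x) y = σ s * H x y)
    (H_smul_right : ∀ (s : F) x y, H x (s • y) = s * H x y)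
    (H_det : ∀ (k : ℕ) (u w : Fin k → V),
      H (wedgeFam F u) (wedgeFam F w) = Matrix.det (Matrix.of fun i j => h (u i) (w j)))
    (b : ExteriorAlgebra F V →ₗ[F] F)
    (hb_inj : ∀ z ∈ ⋀[F]^n V, b z = 0 → z = 0)
    (J : ExteriorAlgebra F V → ExteriorAlgebra F V)
    (hJ_mem : ∀ x ∈ ⋀[F]^ℓ V, J x ∈ ⋀[F]^(n - ℓ) V)
    (hJ_char : ∀ x ∈ ⋀[F]^ℓ V, ∀ y ∈ ⋀[F]^ℓ V, b (J x * y) = H x y)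
    (lam : V ≃ₗ[F] V) (r : F) (hr : r ≠ 0)
    (hsim : ∀ u w : V, h (lam u) (lam w) = r * h u w) :
    ∀ x ∈ ⋀[F]^ℓ V,
      ExteriorAlgebra.map (lam : V →ₗ[F] V) (J x)
        = (LinearMap.det (lam : V →ₗ[F] V) / r ^ ℓ)
            • J (ExteriorAlgebra.map (lam : V →ₗ[F] V) x) := by
  intro x hx
  set f : V →ₗ[F] V := (lam : V →ₗ[F] V)
  set t := LinearMap.det f / r ^ ℓ with ht
  let B := LinearMap.mk₂'ₛₗ σ.toRingHom (RingHom.id F) H H_add_left H_smul_left H_add_right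
    H_smul_right
  have hmul {a c : ExteriorAlgebra F V} (ha : a ∈ ⋀[F]^(n - ℓ) V) (hc : c ∈ ⋀[F]^ℓ V) :
      a * c ∈ ⋀[F]^n V := by
    simpa [Nat.sub_add_cancel hℓ] using SetLike.GradedMul.mul_mem ha hc
  have hfx : map f x ∈ ⋀[F]^ℓ V := map_mem_exteriorPower f hx
  have hD : map f (J x) - t • J (map f x) ∈ ⋀[F]^(n - ℓ) V :=
    sub_mem (map_mem_exteriorPower f (hJ_mem x hx)) (Submodule.smul_mem _ _ (hJ_mem _ hfx))
  rw [← sub_eq_zero]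
  refine eq_zero_of_forall_mul_eq_zero v (k := n - ℓ) (m := ℓ)
    (by rw [Fintype.card_fin]; omega) hD ?_
  intro z hz
  obtain ⟨y, hy, rfl⟩ := exists_mem_exteriorPower_map_eq lam hz
  apply hb_inj _ (hmul hD (map_mem_exteriorPower f hy))
  have hHf : H (map f x) (map f y) = r ^ ℓ * H x y :=
    apply_map_map_of_similitude B h (H_det ℓ) f r hsim hx hy
  calc b ((map f (J x) - t • J (map f x)) * map f y)
      = b (map f (J x * y)) - t * b (J (map f x) * map f y) := by
        rw [sub_mul, map_sub, smul_mul_assoc, map_smul, smul_eq_mul, ← map_mul (map f) (J x) y]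
    _ = LinearMap.det f * H x y - t * (r ^ ℓ * H x y) := by
        rw [apply_map_eq_det_mul v b f (hmul (hJ_mem x hx) hy), hJ_char x hx y hy,
          hJ_char _ hfx _ (map_mem_exteriorPower f hy), hHf]
    _ = 0 := by
        rw [ht]
        field_simp
        ring

/-- an `F`-linear similitude `λ` of `h` with multiplier `r`
conjugates the Hodge operator to `t·J` with `t = r^{-ℓ}·det λ`:
`Λ^{n-ℓ}λ ∘ J ∘ (Λ^ℓ λ)⁻¹ = t • J`, equivalently
`Λ^{n-ℓ}λ (J x) = t • J (Λ^ℓ λ x)` for all `x ∈ Λ^ℓ V`. -/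
theorem similitude_conjugates_hodge
    {F V : Type*} [Field F] [AddCommGroup V] [Module F V] [FiniteDimensional F V]
    (n ℓ : ℕ) (hfr : Module.finrank F V = n) (hℓ : ℓ ≤ n)
    (σ : F ≃+* F) (hσ : ∀ a, σ (σ a) = a)
    (h : V → V → F)
    (h_add_left : ∀ u u' w, h (u + u') w = h u w + h u' w)
    (h_add_right : ∀ u w w', h u (w + w') = h u w + h u w')
    (h_smul_left : ∀ (s : F) u w, h (s • u) w = σ s * h u w)
    (h_smul_right : ∀ (s : F) u w, h u (s • w) = s * h u w)
    (h_herm : ∀ u w, h w u = σ (h u w))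
    (h_nondeg : ∀ u, (∀ w, h u w = 0) → u = 0)
    (v : Module.Basis (Fin n) F V)
    (h_orth : ∀ i j, i ≠ j → h (v i) (v j) = 0)
    (H : ExteriorAlgebra F V → ExteriorAlgebra F V → F)
    (H_add_left : ∀ x x' y, H (x + x') y = H x y + H x' y)
    (H_add_right : ∀ x y y', H x (y + y') = H x y + H x y')
    (H_smul_left : ∀ (s : F) x y, H (s • x) y = σ s * H x y)
    (H_smul_right : ∀ (s : F) x y, H x (s • y) = s * H x y)
    (H_det : ∀ (k : ℕ) (u w : Fin k → V),
      H (wedgeFam F u) (wedgeFam F w) = Matrix.det (Matrix.of fun i j => h (u i) (w j)))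
    (H_cross : ∀ (k m : ℕ), k ≠ m → ∀ x ∈ ⋀[F]^k V, ∀ y ∈ ⋀[F]^m V, H x y = 0)
    (b : ExteriorAlgebra F V →ₗ[F] F)
    (hb_inj : ∀ z ∈ ⋀[F]^n V, b z = 0 → z = 0)
    (hb_off : ∀ (k : ℕ), k ≠ n → ∀ z ∈ ⋀[F]^k V, b z = 0)
    (J : ExteriorAlgebra F V → ExteriorAlgebra F V)
    (hJ_mem : ∀ x ∈ ⋀[F]^ℓ V, J x ∈ ⋀[F]^(n - ℓ) V)
    (hJ_char : ∀ x ∈ ⋀[F]^ℓ V, ∀ y ∈ ⋀[F]^ℓ V, b (J x * y) = H x y)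
    (lam : V ≃ₗ[F] V) (r : F) (hr : r ≠ 0)
    (hsim : ∀ u w : V, h (lam u) (lam w) = r * h u w) :
    ∀ x ∈ ⋀[F]^ℓ V,
      ExteriorAlgebra.map (lam : V →ₗ[F] V) (J x)
        = (LinearMap.det (lam : V →ₗ[F] V) / r ^ ℓ)
            • J (ExteriorAlgebra.map (lam : V →ₗ[F] V) x) :=
  similitude_conjugates_hodge_general n ℓ hℓ σ h v H H_add_left H_add_right H_smul_left H_smul_right
    H_det b hb_inj J hJ_mem hJ_char lam r hr hsim
end

section
/- For X, Y ∈ Λ^ℓ V (n = 2ℓ): g(X,Y) = 0 if and only if Pf(X,Y) = 0 and Λ^ℓ h(X,Y) = 0. Consequently g is non-degenerate, and if Λ^ℓ h is anisotropic then g is anisotropic. -/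
/-!
`Kmk x₀ x₁` has first column `(x₀, x₁)` and `(-1)^ℓ` is a unit, so `g(X, Y) = 0` exactly when
both `Λ^ℓ h(X, Y)` and `Pf(X, Y)` vanish; non-degeneracy and anisotropy of `g` thereby reduce to
those of `Λ^ℓ h`. For an `h`-orthogonal basis `v`, the ordered wedges `v_S` (`|S| = ℓ`) span
`Λ^ℓ V`, and by the Gram determinant formula they are `Λ^ℓ h`-orthogonal with
`Λ^ℓ h(v_S, v_S) = ∏_{i ∈ S} h(v_i, v_i) ≠ 0`; hence every coefficient of a vector in the
radical of `Λ^ℓ h` vanishes.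
-/

open ExteriorAlgebra

open Set.powersetCard

theorem Kmk_eq_zero_iff {F : Type*} [Field F] {σ : F → F} (hσ : σ 0 = 0) (δ x0 x1 : F) :
    Kmk σ δ x0 x1 = 0 ↔ x0 = 0 ∧ x1 = 0 := by
  constructor
  · intro hK
    exact ⟨by simpa [Kmk] using congrFun₂ hK 0 0, by simpa [Kmk] using congrFun₂ hK 1 0⟩
  · rintro ⟨rfl, rfl⟩
    ext i j
    fin_cases i <;> fin_cases j <;> simp [Kmk, hσ]

section Orthogonal

variable {F M ι : Type*} [Field F] [AddCommGroup M] [Module F M]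

theorem eq_zero_of_mem_span_of_orthogonal [Fintype ι] (σ : F →+* F) {B : M → M → F}
    (hB_add : ∀ x x' y, B (x + x') y = B x y + B x' y)
    (hB_smul : ∀ (s : F) x y, B (s • x) y = σ s * B x y)
    {e : ι → M} (he_orth : ∀ s t, s ≠ t → B (e s) (e t) = 0) (he_self : ∀ t, B (e t) (e t) ≠ 0)
    {X : M} (hX : X ∈ Submodule.span F (Set.range e)) (hXe : ∀ t, B X (e t) = 0) : X = 0 := by
  obtain ⟨c, rfl⟩ := (Submodule.mem_span_range_iff_exists_fun F).1 hX
  suffices c = 0 by simp [this]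
  ext t
  let Bt : M →ₛₗ[σ] F :=
    { toFun := (B · (e t)), map_add' := (hB_add · · _), map_smul' := (hB_smul · · _) }
  have hBt : Bt (∑ s, c s • e s) = σ (c t) * B (e t) (e t) := by
    rw [map_sum, Finset.sum_eq_single t (fun s _ hst => ?_) (by simp)]
    · exact hB_smul _ _ _
    · change B (c s • e s) (e t) = 0
      rw [hB_smul, he_orth s t hst, mul_zero]
  have hXt : Bt (∑ s, c s • e s) = 0 := hXe t
  rw [hBt, mul_eq_zero, map_eq_zero] at hXt
  exact hXt.resolve_right (he_self t)

theorem self_ne_zero_of_orthogonal_basis {h : M → M → F}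
    (h_add_right : ∀ u w w', h u (w + w') = h u w + h u w')
    (h_smul_right : ∀ (s : F) u w, h u (s • w) = s * h u w)
    (h_nondeg : ∀ u, (∀ w, h u w = 0) → u = 0)
    (v : Module.Basis ι F M) (h_orth : ∀ i j, i ≠ j → h (v i) (v j) = 0) (i : ι) :
    h (v i) (v i) ≠ 0 := by
  intro hii
  let hv : M →ₗ[F] F :=
    { toFun := h (v i), map_add' := h_add_right _, map_smul' := (h_smul_right · _) }
  have hv_zero : hv = 0 := v.ext fun j => by
    rcases eq_or_ne i j with rfl | hij
    · exact hii
    · exact h_orth i j hij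
  exact v.ne_zero i (h_nondeg _ fun w => LinearMap.congr_fun hv_zero w)

end Orthogonal

section Gram

variable {R M ι : Type*} [CommRing R] {h : M → M → R} {e : ι → M} {k : ℕ}

theorem det_gram_ne_zero_of_injective [IsDomain R] (h_orth : ∀ i j, i ≠ j → h (e i) (e j) = 0)
    (h_self : ∀ i, h (e i) (e i) ≠ 0) {s : Fin k → ι} (hs : s.Injective) :
    (Matrix.of fun i j => h (e (s i)) (e (s j))).det ≠ 0 := by
  have hdiag : (Matrix.of fun i j => h (e (s i)) (e (s j))) =
      Matrix.diagonal fun i => h (e (s i)) (e (s i)) := by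
    ext i j
    rcases eq_or_ne i j with rfl | hij
    · simp
    · simpa [Matrix.diagonal_apply_ne _ hij] using h_orth _ _ (hs.ne hij)
  rw [hdiag, Matrix.det_diagonal]
  exact Finset.prod_ne_zero_iff.2 fun i _ => h_self _

theorem det_gram_eq_zero_of_notMem_range (h_orth : ∀ i j, i ≠ j → h (e i) (e j) = 0)
    {s t : Fin k → ι} {i : Fin k} (hi : s i ∉ Set.range t) :
    (Matrix.of fun i j => h (e (s i)) (e (t j))).det = 0 :=
  Matrix.det_eq_zero_of_row_eq_zero i fun j => h_orth _ _ fun hij => hi ⟨j, hij.symm⟩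

end Gram

theorem ιMulti_family_eq_wedgeFam {F V ι : Type*} [Field F] [AddCommGroup V] [Module F V]
    [LinearOrder ι] {k : ℕ} (v : ι → V) (s : Set.powersetCard ι k) :
    ExteriorAlgebra.ιMulti_family F k v s = wedgeFam F (v ∘ ofFinEmbEquiv.symm s) :=
  ιMulti_apply _

theorem eq_zero_of_forall_exteriorPower_pairing_eq_zero {F V ι : Type*} [Field F]
    [AddCommGroup V] [Module F V] [Fintype ι] [LinearOrder ι] (σ : F →+* F) {h : V → V → F}
    (h_add_right : ∀ u w w', h u (w + w') = h u w + h u w')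
    (h_smul_right : ∀ (s : F) u w, h u (s • w) = s * h u w)
    (h_nondeg : ∀ u, (∀ w, h u w = 0) → u = 0)
    (v : Module.Basis ι F V) (h_orth : ∀ i j, i ≠ j → h (v i) (v j) = 0) {ℓ : ℕ}
    {H : ExteriorAlgebra F V → ExteriorAlgebra F V → F}
    (H_add_left : ∀ x x' y, H (x + x') y = H x y + H x' y)
    (H_smul_left : ∀ (s : F) x y, H (s • x) y = σ s * H x y)
    (H_det : ∀ u w : Fin ℓ → V,
      H (wedgeFam F u) (wedgeFam F w) = Matrix.det (Matrix.of fun i j => h (u i) (w j)))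
    {X : ExteriorAlgebra F V} (hX : X ∈ ⋀[F]^ℓ V) (hXY : ∀ Y ∈ ⋀[F]^ℓ V, H X Y = 0) :
    X = 0 := by
  have hspan := exteriorPower.ιMulti_family_span_fixedDegree_of_span F (n := ℓ) v.span_eq
  set e := ExteriorAlgebra.ιMulti_family F ℓ v
  have hHe : ∀ s t, H (e s) (e t) =
      (Matrix.of fun i j => h (v (ofFinEmbEquiv.symm s i)) (v (ofFinEmbEquiv.symm t j))).det :=
    fun s t => (congrArg₂ H (ιMulti_family_eq_wedgeFam v s) (ιMulti_family_eq_wedgeFam v t)).trans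
      (H_det _ _)
  refine eq_zero_of_mem_span_of_orthogonal σ H_add_left H_smul_left (e := e) (fun s t hst => ?_)
    (fun t => ?_) (hspan ▸ hX) fun t => hXY _ (hspan ▸ Submodule.subset_span ⟨t, rfl⟩)
  · obtain ⟨a, has, hat⟩ := (exists_mem_notMem_iff_ne s t).1 hst
    obtain ⟨i, rfl⟩ := (mem_range_ofFinEmbEquiv_symm_iff_mem s a).2 has
    rw [hHe]
    exact det_gram_eq_zero_of_notMem_range h_orth
      (mt (mem_range_ofFinEmbEquiv_symm_iff_mem t _).1 hat)
  · rw [hHe]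
    exact det_gram_ne_zero_of_injective h_orth
      (self_ne_zero_of_orthogonal_basis h_add_right h_smul_right h_nondeg v h_orth)
      (ofFinEmbEquiv.symm t).injective

theorem g_vanishing_nondegenerate_anisotropic_general
    {F V : Type*} [Field F] [AddCommGroup V] [Module F V]
    (n ℓ : ℕ)
    (σ : F ≃+* F)
    (h : V → V → F)
    (h_add_right : ∀ u w w', h u (w + w') = h u w + h u w')
    (h_smul_right : ∀ (s : F) u w, h u (s • w) = s * h u w)
    (h_nondeg : ∀ u, (∀ w, h u w = 0) → u = 0)
    (v : Module.Basis (Fin n) F V)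
    (h_orth : ∀ i j, i ≠ j → h (v i) (v j) = 0)
    (H : ExteriorAlgebra F V → ExteriorAlgebra F V → F)
    (H_add_left : ∀ x x' y, H (x + x') y = H x y + H x' y)
    (H_smul_left : ∀ (s : F) x y, H (s • x) y = σ s * H x y)
    (H_det : ∀ (k : ℕ) (u w : Fin k → V),
      H (wedgeFam F u) (wedgeFam F w) = Matrix.det (Matrix.of fun i j => h (u i) (w j)))
    (b : ExteriorAlgebra F V →ₗ[F] F)
    (δ : F) :
    -- g(X,Y) = 0 ↔ Pf(X,Y) = 0 ∧ Λ^ℓh(X,Y) = 0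
    (∀ X ∈ ⋀[F]^ℓ V, ∀ Y ∈ ⋀[F]^ℓ V,
        (Kmk ⇑σ δ (H X Y) ((-1 : F) ^ ℓ * b (X * Y)) = 0 ↔
          (b (X * Y) = 0 ∧ H X Y = 0))) ∧
    -- g is non-degenerate
    (∀ X ∈ ⋀[F]^ℓ V,
        (∀ Y ∈ ⋀[F]^ℓ V, Kmk ⇑σ δ (H X Y) ((-1 : F) ^ ℓ * b (X * Y)) = 0) → X = 0) ∧
    -- if Λ^ℓ h is anisotropic then so is g
    ((∀ X ∈ ⋀[F]^ℓ V, X ≠ 0 → H X X ≠ 0) →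
      ∀ X ∈ ⋀[F]^ℓ V, X ≠ 0 →
        Kmk ⇑σ δ (H X X) ((-1 : F) ^ ℓ * b (X * X)) ≠ 0) := by
  have hg : ∀ X Y, Kmk σ δ (H X Y) ((-1 : F) ^ ℓ * b (X * Y)) = 0 ↔ b (X * Y) = 0 ∧ H X Y = 0 :=
    fun X Y => by simp [Kmk_eq_zero_iff (map_zero σ), and_comm]
  refine ⟨fun X _ Y _ => hg X Y, fun X hX hXY => ?_,
    fun haniso X hX hX0 hXX => haniso X hX hX0 ((hg X X).1 hXX).2⟩
  exact eq_zero_of_forall_exteriorPower_pairing_eq_zero σ h_add_right h_smul_right h_nondeg v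
    h_orth H_add_left H_smul_left (H_det ℓ) hX fun Y hY => ((hg X Y).1 (hXY Y hY)).2

/-- for `X, Y ∈ Λ^ℓ V` (`n = 2ℓ`): `g(X,Y) = 0` iff `Pf(X,Y) = 0`
and `Λ^ℓh(X,Y) = 0`; consequently `g` is non-degenerate, and anisotropic whenever
`Λ^ℓ h` is anisotropic.  Here `g(X,Y) = Λ^ℓh(X,Y) + j·(−1)^ℓ·Pf(X,Y) ∈ K_ℓ`. -/
theorem g_vanishing_nondegenerate_anisotropic
    {F V : Type*} [Field F] [AddCommGroup V] [Module F V] [FiniteDimensional F V]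
    (n ℓ : ℕ) (hfr : Module.finrank F V = n) (hn2 : n = 2 * ℓ)
    (σ : F ≃+* F) (hσ : ∀ a, σ (σ a) = a)
    (h : V → V → F)
    (h_add_left : ∀ u u' w, h (u + u') w = h u w + h u' w)
    (h_add_right : ∀ u w w', h u (w + w') = h u w + h u w')
    (h_smul_left : ∀ (s : F) u w, h (s • u) w = σ s * h u w)
    (h_smul_right : ∀ (s : F) u w, h u (s • w) = s * h u w)
    (h_herm : ∀ u w, h w u = σ (h u w))
    (h_nondeg : ∀ u, (∀ w, h u w = 0) → u = 0)
    (v : Module.Basis (Fin n) F V)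
    (h_orth : ∀ i j, i ≠ j → h (v i) (v j) = 0)
    (H : ExteriorAlgebra F V → ExteriorAlgebra F V → F)
    (H_add_left : ∀ x x' y, H (x + x') y = H x y + H x' y)
    (H_add_right : ∀ x y y', H x (y + y') = H x y + H x y')
    (H_smul_left : ∀ (s : F) x y, H (s • x) y = σ s * H x y)
    (H_smul_right : ∀ (s : F) x y, H x (s • y) = s * H x y)
    (H_det : ∀ (k : ℕ) (u w : Fin k → V),
      H (wedgeFam F u) (wedgeFam F w) = Matrix.det (Matrix.of fun i j => h (u i) (w j)))
    (H_cross : ∀ (k m : ℕ), k ≠ m → ∀ x ∈ ⋀[F]^k V, ∀ y ∈ ⋀[F]^m V, H x y = 0)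
    (b : ExteriorAlgebra F V →ₗ[F] F)
    (hb_inj : ∀ z ∈ ⋀[F]^n V, b z = 0 → z = 0)
    (hb_off : ∀ (k : ℕ), k ≠ n → ∀ z ∈ ⋀[F]^k V, b z = 0)
    (J : ExteriorAlgebra F V → ExteriorAlgebra F V)
    (hJ_mem : ∀ x ∈ ⋀[F]^ℓ V, J x ∈ ⋀[F]^ℓ V)
    (hJ_char : ∀ x ∈ ⋀[F]^ℓ V, ∀ y ∈ ⋀[F]^ℓ V, b (J x * y) = H x y)
    (δ : F) (hδR : σ δ = δ) (hδ0 : δ ≠ 0)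
    (hJsq : ∀ x ∈ ⋀[F]^ℓ V, J (J x) = δ • x) :
    -- g(X,Y) = 0 ↔ Pf(X,Y) = 0 ∧ Λ^ℓh(X,Y) = 0
    (∀ X ∈ ⋀[F]^ℓ V, ∀ Y ∈ ⋀[F]^ℓ V,
        (Kmk ⇑σ δ (H X Y) ((-1 : F) ^ ℓ * b (X * Y)) = 0 ↔
          (b (X * Y) = 0 ∧ H X Y = 0))) ∧
    -- g is non-degenerate
    (∀ X ∈ ⋀[F]^ℓ V,
        (∀ Y ∈ ⋀[F]^ℓ V, Kmk ⇑σ δ (H X Y) ((-1 : F) ^ ℓ * b (X * Y)) = 0) → X = 0) ∧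
    -- if Λ^ℓ h is anisotropic then so is g
    ((∀ X ∈ ⋀[F]^ℓ V, X ≠ 0 → H X X ≠ 0) →
      ∀ X ∈ ⋀[F]^ℓ V, X ≠ 0 →
        Kmk ⇑σ δ (H X X) ((-1 : F) ^ ℓ * b (X * X)) ≠ 0) :=
  g_vanishing_nondegenerate_anisotropic_general n ℓ σ h h_add_right h_smul_right h_nondeg v h_orth H
    H_add_left H_smul_left H_det b δ
end

section
/- If the σ-hermitian form h on V (dim V = n ≥ 3, n = 2ℓ with 2 ≤ ℓ < n) is isotropic, then the induced form Λ^ℓ h on Λ^ℓ V is isotropic, and the K_ℓ-valued form g is isotropic as well. -/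
/-!
Let `u ≠ 0` with `h u u = 0`. Its orthogonal `u^⊥` is a hyperplane containing `u`, so, as
`ℓ < n`, `u` extends to linearly independent `f₀ = u, f₁, …, f_{ℓ-1}` in `u^⊥`. The wedge
`X = f₀ ∧ ⋯ ∧ f_{ℓ-1}` is nonzero, `Λ^ℓ h (X, X)` is the Gram determinant `det (h (fᵢ, fⱼ))`,
whose first row vanishes, and `X ∧ X = 0` because `X` is decomposable. Hence both components
of `g (X, X)` vanish.
-/

open ExteriorAlgebra

open Module

theorem wedgeFam_eq_ιMulti (F : Type*) {V : Type*} [Field F] [AddCommGroup V] [Module F V]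
    {k : ℕ} (u : Fin k → V) : wedgeFam F u = ιMulti F k u :=
  rfl

theorem ExteriorAlgebra.ιMulti_ne_zero_of_linearIndependent {K E : Type*} [Field K]
    [AddCommGroup E] [Module K E] {k : ℕ} {v : Fin k → E} (hv : LinearIndependent K v) :
    ιMulti K k v ≠ 0 := by
  have := (exteriorPower.ιMulti_family_linearIndependent_field (n := k) hv).ne_zero
      (Set.powersetCard.ofFinEmbEquiv (OrderIso.refl (Fin k)).toOrderEmbedding)
  simpa [exteriorPower.ιMulti_family, ← Submodule.coe_eq_zero] using this

theorem ExteriorAlgebra.ιMulti_mul_self {R M : Type*} [CommRing R] [AddCommGroup M] [Module R M]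
    {k : ℕ} (hk : k ≠ 0) (v : Fin k → M) : ιMulti R k v * ιMulti R k v = 0 := by
  let i : Fin k := ⟨0, Nat.pos_of_ne_zero hk⟩
  rw [ιMulti_mul_ιMulti]
  refine ιMulti_eq_zero_of_not_inj fun hinj => ?_
  have := @hinj (Fin.castAdd k i) (Fin.natAdd k i) (by rw [Fin.append_left, Fin.append_right])
  simp [i, Fin.ext_iff] at this
  omega

theorem exists_linearIndependent_fin_succ_zero_eq {K M : Type*} [DivisionRing K]
    [AddCommGroup M] [Module K M] {u : M} (hu : u ≠ 0) {k : ℕ} (hk : k < finrank K M) :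
    ∃ f : Fin (k + 1) → M, LinearIndependent K f ∧ f 0 = u := by
  induction k with
  | zero => exact ⟨fun _ => u, (linearIndependent_unique_iff (ι := Fin 1)).mpr hu, rfl⟩
  | succ k ih =>
    obtain ⟨f, hf, hf0⟩ := ih (by omega)
    obtain ⟨x, hx⟩ := exists_linearIndependent_snoc_of_lt_finrank hf hk
    exact ⟨Fin.snoc f x, hx, by rw [← Fin.castSucc_zero, Fin.snoc_castSucc, hf0]⟩

theorem Submodule.exists_linearIndependent_fin_succ_zero_eq {K M : Type*} [DivisionRing K]
    [AddCommGroup M] [Module K M] (W : Submodule K M) {u : M} (huW : u ∈ W) (hu : u ≠ 0)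
    {k : ℕ} (hk : k < finrank K W) :
    ∃ f : Fin (k + 1) → M, LinearIndependent K f ∧ f 0 = u ∧ ∀ i, f i ∈ W := by
  obtain ⟨f, hf, hf0⟩ :=
    _root_.exists_linearIndependent_fin_succ_zero_eq (u := (⟨u, huW⟩ : W)) (by simpa using hu) hk
  exact ⟨W.subtype ∘ f, hf.map' _ W.ker_subtype, by simp [hf0], fun i => (f i).2⟩

theorem Kmk_zero_zero {F : Type*} [Field F] {σ : F → F} (hσ : σ 0 = 0) (δ : F) :
    Kmk σ δ 0 0 = 0 := by
  ext i j
  fin_cases i <;> fin_cases j <;> simp [Kmk, hσ]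

theorem isotropic_h_gives_isotropic_g_general
    {F V : Type*} [Field F] [AddCommGroup V] [Module F V] [FiniteDimensional F V]
    (n ℓ : ℕ) (hfr : Module.finrank F V = n)
    (hℓ2 : 2 ≤ ℓ) (hℓn : ℓ < n)
    (σ : F ≃+* F)
    (h : V → V → F)
    (h_add_right : ∀ u w w', h u (w + w') = h u w + h u w')
    (h_smul_right : ∀ (s : F) u w, h u (s • w) = s * h u w)
    (h_nondeg : ∀ u, (∀ w, h u w = 0) → u = 0)
    (H : ExteriorAlgebra F V → ExteriorAlgebra F V → F)
    (H_det : ∀ (k : ℕ) (u w : Fin k → V),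
      H (wedgeFam F u) (wedgeFam F w) = Matrix.det (Matrix.of fun i j => h (u i) (w j)))
    (b : ExteriorAlgebra F V →ₗ[F] F)
    (δ : F)
    -- h is isotropic
    (hiso : ∃ u : V, u ≠ 0 ∧ h u u = 0) :
    -- Λ^ℓ h is isotropic …
    (∃ X ∈ ⋀[F]^ℓ V, X ≠ 0 ∧ H X X = 0) ∧
    -- … and g is isotropic as well
    (∃ X ∈ ⋀[F]^ℓ V, X ≠ 0 ∧
        Kmk ⇑σ δ (H X X) ((-1 : F) ^ ℓ * b (X * X)) = 0) := by
  obtain ⟨u, hu0, huu⟩ := hiso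
  let φ : Dual F V :=
    { toFun := h u, map_add' := h_add_right u, map_smul' := fun s w => h_smul_right s u w }
  have hφ : φ ≠ 0 := fun hφ0 => hu0 (h_nondeg u fun w => LinearMap.congr_fun hφ0 w)
  obtain ⟨k, rfl⟩ : ∃ k, ℓ = k + 1 := ⟨ℓ - 1, by omega⟩
  have hk : k < finrank F (LinearMap.ker φ) := by
    have := Dual.finrank_ker_add_one_of_ne_zero hφ
    omega
  obtain ⟨f, hf, hf0, hfφ⟩ :=
    (LinearMap.ker φ).exists_linearIndependent_fin_succ_zero_eq huu hu0 hk
  set X := ιMulti F (k + 1) f with hX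
  have hXmem : X ∈ ⋀[F]^(k + 1) V := ιMulti_range F _ ⟨f, rfl⟩
  have hX0 : X ≠ 0 := ιMulti_ne_zero_of_linearIndependent hf
  have hHXX : H X X = 0 := by
    rw [hX, ← wedgeFam_eq_ιMulti, H_det]
    refine Matrix.det_eq_zero_of_row_eq_zero 0 fun j => ?_
    rw [Matrix.of_apply, hf0]
    exact hfφ j
  refine ⟨⟨X, hXmem, hX0, hHXX⟩, X, hXmem, hX0, ?_⟩
  rw [hHXX, ιMulti_mul_self (Nat.succ_ne_zero k), map_zero, mul_zero]
  exact Kmk_zero_zero (map_zero σ) δ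

/-- if the σ-hermitian form `h` is isotropic (with `n = 2ℓ`,
`2 ≤ ℓ < n`), then `Λ^ℓ h` is isotropic and the `K_ℓ`-valued form `g` is
isotropic as well. -/
theorem isotropic_h_gives_isotropic_g
    {F V : Type*} [Field F] [AddCommGroup V] [Module F V] [FiniteDimensional F V]
    (n ℓ : ℕ) (hfr : Module.finrank F V = n) (hn2 : n = 2 * ℓ)
    (hℓ2 : 2 ≤ ℓ) (hℓn : ℓ < n)
    (σ : F ≃+* F) (hσ : ∀ a, σ (σ a) = a)
    (h : V → V → F)
    (h_add_left : ∀ u u' w, h (u + u') w = h u w + h u' w)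
    (h_add_right : ∀ u w w', h u (w + w') = h u w + h u w')
    (h_smul_left : ∀ (s : F) u w, h (s • u) w = σ s * h u w)
    (h_smul_right : ∀ (s : F) u w, h u (s • w) = s * h u w)
    (h_herm : ∀ u w, h w u = σ (h u w))
    (h_nondeg : ∀ u, (∀ w, h u w = 0) → u = 0)
    (v : Module.Basis (Fin n) F V)
    (h_orth : ∀ i j, i ≠ j → h (v i) (v j) = 0)
    (H : ExteriorAlgebra F V → ExteriorAlgebra F V → F)
    (H_add_left : ∀ x x' y, H (x + x') y = H x y + H x' y)
    (H_add_right : ∀ x y y', H x (y + y') = H x y + H x y')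
    (H_smul_left : ∀ (s : F) x y, H (s • x) y = σ s * H x y)
    (H_smul_right : ∀ (s : F) x y, H x (s • y) = s * H x y)
    (H_det : ∀ (k : ℕ) (u w : Fin k → V),
      H (wedgeFam F u) (wedgeFam F w) = Matrix.det (Matrix.of fun i j => h (u i) (w j)))
    (H_cross : ∀ (k m : ℕ), k ≠ m → ∀ x ∈ ⋀[F]^k V, ∀ y ∈ ⋀[F]^m V, H x y = 0)
    (b : ExteriorAlgebra F V →ₗ[F] F)
    (hb_inj : ∀ z ∈ ⋀[F]^n V, b z = 0 → z = 0)
    (hb_off : ∀ (k : ℕ), k ≠ n → ∀ z ∈ ⋀[F]^k V, b z = 0)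
    (J : ExteriorAlgebra F V → ExteriorAlgebra F V)
    (hJ_mem : ∀ x ∈ ⋀[F]^ℓ V, J x ∈ ⋀[F]^ℓ V)
    (hJ_char : ∀ x ∈ ⋀[F]^ℓ V, ∀ y ∈ ⋀[F]^ℓ V, b (J x * y) = H x y)
    (δ : F) (hδR : σ δ = δ) (hδ0 : δ ≠ 0)
    (hJsq : ∀ x ∈ ⋀[F]^ℓ V, J (J x) = δ • x)
    -- h is isotropic
    (hiso : ∃ u : V, u ≠ 0 ∧ h u u = 0) :
    -- Λ^ℓ h is isotropic …
    (∃ X ∈ ⋀[F]^ℓ V, X ≠ 0 ∧ H X X = 0) ∧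
    -- … and g is isotropic as well
    (∃ X ∈ ⋀[F]^ℓ V, X ≠ 0 ∧
        Kmk ⇑σ δ (H X X) ((-1 : F) ^ ℓ * b (X * X)) = 0) :=
  isotropic_h_gives_isotropic_g_general n ℓ hfr hℓ2 hℓn σ h h_add_right h_smul_right h_nondeg H
    H_det b δ hiso
end

section
/- Let n = 4, h a non-degenerate diagonalizable σ-hermitian form on F⁴ of positive Witt index whose discriminant is 1 (i.e., det of a Gram matrix is a norm σ(c)c). Then h has Witt index exactly 2. -/
/-!
An `n`-dimensional totally isotropic subspace `W` embeds σ-semilinearly into its annihilator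
in the dual via `w ↦ h w ·`, so `2 n ≤ 4`. For the converse, complete the isotropic `u` to a
hyperbolic pair `(u, z)` and choose `w₁, w₂` orthogonal to `u`, `z` and to each other. If
neither is isotropic, the Gram determinant of `(u, z, w₁, w₂)` is `-(a b)` with `a = h w₁ w₁`,
`b = h w₂ w₂`; it differs from the discriminant by a norm, so `-(a b) = σ(m) m`, and then
`(m / a) w₁ + w₂` is isotropic and spans a totally isotropic plane together with `u`.
-/

open Module Submodule Matrix

theorem Matrix.det_hyperbolic_block_diag {R : Type*} [CommRing R] (d a b : R) :
    !![0, 1, 0, 0; 1, d, 0, 0; 0, 0, a, 0; 0, 0, 0, b].det = -(a * b) := by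
  simp [det_succ_row_zero, Fin.sum_univ_succ, Fin.succAbove]

namespace LinearMap

variable {F V : Type*} [Field F] [AddCommGroup V] [Module F V] {σ : F →+* F}

def IsTotallyIsotropic (B : V →ₛₗ[σ] V →ₗ[F] F) (W : Submodule F V) : Prop :=
  ∀ x ∈ W, ∀ y ∈ W, B x y = 0

def gramMatrix {ι : Type*} (B : V →ₛₗ[σ] V →ₗ[F] F) (b : ι → V) : Matrix ι ι F :=
  Matrix.of fun i j => B (b i) (b j)

variable {B : V →ₛₗ[σ] V →ₗ[F] F}

theorem IsTotallyIsotropic.finrank_add_finrank_le [FiniteDimensional F V] [RingHomSurjective σ]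
    (hB : B.SeparatingLeft) {W : Submodule F V} (hW : B.IsTotallyIsotropic W) :
    finrank F W + finrank F W ≤ finrank F V := by
  let j : W →ₛₗ[σ] W.dualAnnihilator := (B.domRestrict W).codRestrict _ fun w =>
    (mem_dualAnnihilator _).mpr fun x hx => hW w w.2 x hx
  have hj : Function.Injective j := (injective_iff_map_eq_zero j).mpr fun w hw =>
    Subtype.ext (hB w fun x => DFunLike.congr_fun (congrArg Subtype.val hw) x)
  have := finrank_le_finrank_of_rank_le_rank (lift_rank_le_of_surjective_injective σ
    j.toAddMonoidHom σ.surjective hj fun r w => j.map_smulₛₗ r w) (rank_lt_aleph0 _ _)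
  have := Subspace.finrank_add_finrank_dualAnnihilator_eq W
  omega

theorem SeparatingLeft.exists_apply_eq_one (hB : B.SeparatingLeft) {u : V} (hu : u ≠ 0) :
    ∃ z, B u z = 1 := by
  obtain ⟨y, hy⟩ : ∃ y, B u y ≠ 0 := by
    by_contra! h
    exact hu (hB u h)
  exact ⟨(B u y)⁻¹ • y, by simp [hy]⟩

theorem IsRefl.isTotallyIsotropic_span_pair (hB : B.IsRefl) {x y : V} (hx : B x x = 0)
    (hy : B y y = 0) (hxy : B x y = 0) : B.IsTotallyIsotropic (span F {x, y}) := by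
  intro a ha b hb
  obtain ⟨a₁, a₂, rfl⟩ := mem_span_pair.mp ha
  obtain ⟨b₁, b₂, rfl⟩ := mem_span_pair.mp hb
  simp [hx, hy, hxy, hB.eq_zero hxy]

theorem finrank_span_pair_eq_two {x y z : V} (hxz : B x z = 1) (hyz : B y z = 0) (hy : y ≠ 0) :
    finrank F (span F {x, y}) = 2 := by
  have hli : LinearIndependent F ![x, y] := by
    refine LinearIndependent.pair_iff.mpr fun s t hst => ?_
    have hs : σ s = 0 := by simpa [hxz, hyz] using congr(B $hst z)
    rw [map_eq_zero] at hs
    subst hs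
    simpa [hy] using hst
  have := finrank_span_eq_card hli
  rwa [range_cons_cons_empty, Fintype.card_fin] at this

theorem gramMatrix_eq_mul {ι ι' : Type*} [Fintype ι] [DecidableEq ι] (b : Basis ι F V)
    (w : ι' → V) :
    B.gramMatrix w = ((b.toMatrix w).map σ)ᵀ * B.gramMatrix b * b.toMatrix w := by
  ext k l
  simp only [gramMatrix, Matrix.of_apply, Matrix.mul_apply, Matrix.transpose_apply,
    Matrix.map_apply, Finset.sum_mul]
  conv_lhs => rw [← b.sum_toMatrix_smul_self w k, ← b.sum_toMatrix_smul_self w l]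
  simp only [map_sum, map_smulₛₗ₂, map_smul, LinearMap.sum_apply, smul_eq_mul,
    Finset.mul_sum]
  refine Finset.sum_congr rfl fun i _ => Finset.sum_congr rfl fun j _ => ?_
  ring

theorem det_gramMatrix_eq {ι : Type*} [Fintype ι] [DecidableEq ι] (b : Basis ι F V)
    (w : ι → V) :
    (B.gramMatrix w).det =
      σ (b.toMatrix w).det * (B.gramMatrix b).det * (b.toMatrix w).det := by
  rw [gramMatrix_eq_mul b, Matrix.det_mul, Matrix.det_mul, Matrix.det_transpose, σ.map_det,
    RingHom.mapMatrix_apply]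

theorem IsSymm.apply_self_smul_add_eq_zero (hB : B.IsSymm) {w₁ w₂ : V} {m : F}
    (h₁₂ : B w₁ w₂ = 0) (ha : B w₁ w₁ ≠ 0) (hm : σ m * m = -(B w₁ w₁ * B w₂ w₂)) :
    B ((m / B w₁ w₁) • w₁ + w₂) ((m / B w₁ w₁) • w₁ + w₂) = 0 := by
  have hσa : σ (B w₁ w₁) = B w₁ w₁ := hB.eq w₁ w₁
  have h₂₁ : B w₂ w₁ = 0 := hB.isRefl.eq_zero h₁₂
  simp only [map_add, map_smulₛₗ, LinearMap.add_apply, LinearMap.smul_apply, smul_eq_mul,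
    RingHom.id_apply, h₁₂, h₂₁, map_div₀, hσa]
  field_simp
  linear_combination hm

theorem exists_ne_zero_forall_apply_eq_zero [FiniteDimensional F V] {ι : Type*} [Fintype ι]
    (f : ι → Dual F V) (hf : Fintype.card ι < finrank F V) : ∃ x ≠ 0, ∀ i, f i x = 0 := by
  obtain ⟨x, hx, hx0⟩ := exists_mem_ne_zero_of_ne_bot
    (ker_ne_bot_of_finrank_lt (f := LinearMap.pi f) (by simpa using hf))
  exact ⟨x, hx0, fun i => congr_fun hx i⟩

theorem IsSymm.exists_isotropic_orthogonal_of_det_gramMatrix_eq_norm (hB : B.IsSymm)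
    (v : Basis (Fin 4) F V) {c : F} (hc : (B.gramMatrix v).det = σ c * c) {u z : V}
    (huu : B u u = 0) (huz : B u z = 1) :
    ∃ q ≠ 0, B q q = 0 ∧ B u q = 0 ∧ B z q = 0 := by
  have := Module.Finite.of_basis v
  have hdim : finrank F V = 4 := by simpa using finrank_eq_card_basis v
  obtain ⟨w₁, hw₁, hw₁K⟩ := exists_ne_zero_forall_apply_eq_zero ![B u, B z] (by simp [hdim])
  obtain ⟨w₂, hw₂, hw₂K⟩ :=
    exists_ne_zero_forall_apply_eq_zero ![B u, B z, B w₁] (by simp [hdim])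
  have hu₁ : B u w₁ = 0 := hw₁K 0
  have hz₁ : B z w₁ = 0 := hw₁K 1
  have hu₂ : B u w₂ = 0 := hw₂K 0
  have hz₂ : B z w₂ = 0 := hw₂K 1
  have h₁₂ : B w₁ w₂ = 0 := hw₂K 2
  by_cases ha : B w₁ w₁ = 0
  · exact ⟨w₁, hw₁, ha, hu₁, hz₁⟩
  by_cases hb : B w₂ w₂ = 0
  · exact ⟨w₂, hw₂, hb, hu₂, hz₂⟩
  obtain ⟨m, hm⟩ : ∃ m, σ m * m = -(B w₁ w₁ * B w₂ w₂) := by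
    have hzu : B z u = 1 := by rw [← hB.eq, huz, map_one]
    have hgram : B.gramMatrix ![u, z, w₁, w₂] =
        !![0, 1, 0, 0; 1, B z z, 0, 0; 0, 0, B w₁ w₁, 0; 0, 0, 0, B w₂ w₂] := by
      ext i j
      fin_cases i <;> fin_cases j <;>
        simp [gramMatrix, huu, huz, hzu, hu₁, hz₁, hu₂, hz₂, h₁₂, hB.isRefl.eq_iff]
    have hdet := det_gramMatrix_eq (B := B) v ![u, z, w₁, w₂]
    rw [hgram, hc, Matrix.det_hyperbolic_block_diag] at hdet
    refine ⟨(v.toMatrix ![u, z, w₁, w₂]).det * c, ?_⟩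
    rw [map_mul]
    linear_combination -hdet
  have hm₀ : m ≠ 0 := by
    rintro rfl
    simp [ha, hb] at hm
  refine ⟨(m / B w₁ w₁) • w₁ + w₂, fun hq => hm₀ ?_, hB.apply_self_smul_add_eq_zero h₁₂ ha hm,
    by simp [hu₁, hu₂], by simp [hz₁, hz₂]⟩
  simpa [h₁₂, ha] using congr(B w₁ $hq)

end LinearMap

theorem witt_index_two_of_disc_one_general
    {F V : Type*} [Field F] [AddCommGroup V] [Module F V] [FiniteDimensional F V]
    (σ : F ≃+* F)
    (hfr : Module.finrank F V = 4)
    (h : V → V → F)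
    (h_add_left : ∀ u u' w, h (u + u') w = h u w + h u' w)
    (h_add_right : ∀ u w w', h u (w + w') = h u w + h u w')
    (h_smul_left : ∀ (s : F) u w, h (s • u) w = σ s * h u w)
    (h_smul_right : ∀ (s : F) u w, h u (s • w) = s * h u w)
    (h_herm : ∀ u w, h w u = σ (h u w))
    (h_nondeg : ∀ u, (∀ w, h u w = 0) → u = 0)
    (v : Module.Basis (Fin 4) F V)
    -- the discriminant of h is 1: det of the Gram matrix is a nonzero norm
    (hdisc : ∃ c : F, c ≠ 0 ∧
        Matrix.det (Matrix.of fun i j : Fin 4 => h (v i) (v j)) = σ c * c)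
    -- h has positive Witt index: there is a nonzero isotropic vector
    (hiso : ∃ u : V, u ≠ 0 ∧ h u u = 0) :
    -- there is a 2-dimensional totally isotropic subspace …
    (∃ W : Submodule F V, Module.finrank F W = 2 ∧
        ∀ x ∈ W, ∀ y ∈ W, h x y = 0) ∧
    -- … and every totally isotropic subspace has dimension at most 2
    (∀ W : Submodule F V, (∀ x ∈ W, ∀ y ∈ W, h x y = 0) →
        Module.finrank F W ≤ 2) := by
  let B : V →ₛₗ[(σ : F →+* F)] V →ₗ[F] F :=
    LinearMap.mk₂'ₛₗ _ _ h h_add_left h_smul_left h_add_right h_smul_right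
  have hB : B.IsSymm := ⟨fun x y => (h_herm x y).symm⟩
  have hB_sep : B.SeparatingLeft := h_nondeg
  refine ⟨?_, fun W hW => ?_⟩
  · obtain ⟨c, -, hc⟩ := hdisc
    obtain ⟨u, hu, huu⟩ := hiso
    obtain ⟨z, huz⟩ := hB_sep.exists_apply_eq_one hu
    obtain ⟨q, hq, hqq, huq, hzq⟩ :=
      hB.exists_isotropic_orthogonal_of_det_gramMatrix_eq_norm v hc huu huz
    exact ⟨Submodule.span F {u, q},
      LinearMap.finrank_span_pair_eq_two huz (hB.isRefl.eq_zero hzq) hq,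
      hB.isRefl.isTotallyIsotropic_span_pair huu hqq huq⟩
  · have := LinearMap.IsTotallyIsotropic.finrank_add_finrank_le hB_sep hW
    omega

/-- a non-degenerate diagonalizable σ-hermitian form on a 4-dimensional
space with positive Witt index and discriminant 1 (the determinant of a Gram matrix is
a norm `σ(c)·c`) has Witt index exactly 2. -/
theorem witt_index_two_of_disc_one
    {F V : Type*} [Field F] [AddCommGroup V] [Module F V] [FiniteDimensional F V]
    (σ : F ≃+* F) (hσ : ∀ a, σ (σ a) = a)
    (hfr : Module.finrank F V = 4)
    (h : V → V → F)
    (h_add_left : ∀ u u' w, h (u + u') w = h u w + h u' w)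
    (h_add_right : ∀ u w w', h u (w + w') = h u w + h u w')
    (h_smul_left : ∀ (s : F) u w, h (s • u) w = σ s * h u w)
    (h_smul_right : ∀ (s : F) u w, h u (s • w) = s * h u w)
    (h_herm : ∀ u w, h w u = σ (h u w))
    (h_nondeg : ∀ u, (∀ w, h u w = 0) → u = 0)
    (v : Module.Basis (Fin 4) F V)
    (h_orth : ∀ i j, i ≠ j → h (v i) (v j) = 0)
    -- the discriminant of h is 1: det of the Gram matrix is a nonzero norm
    (hdisc : ∃ c : F, c ≠ 0 ∧
        Matrix.det (Matrix.of fun i j : Fin 4 => h (v i) (v j)) = σ c * c)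
    -- h has positive Witt index: there is a nonzero isotropic vector
    (hiso : ∃ u : V, u ≠ 0 ∧ h u u = 0) :
    -- there is a 2-dimensional totally isotropic subspace …
    (∃ W : Submodule F V, Module.finrank F W = 2 ∧
        ∀ x ∈ W, ∀ y ∈ W, h x y = 0) ∧
    -- … and every totally isotropic subspace has dimension at most 2
    (∀ W : Submodule F V, (∀ x ∈ W, ∀ y ∈ W, h x y = 0) →
        Module.finrank F W ≤ 2) :=
  witt_index_two_of_disc_one_general σ hfr h h_add_left h_add_right h_smul_left h_smul_right h_herm
    h_nondeg v hdisc hiso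
end
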